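/- Let $A$ be a finite set and $M_1, M_2$ be $\{0,1\}$-matrices indexed by $A$ satisfying conditions (H1a)-(H1b): $M_1 M_2 = M_2 M_1$ and $M_1 M_2$ is a $\{0,1\}$-matrix. Suppose $u \in W_m$, $v \in W_n$ (two-dimensional words as above) with $u(m) = v(0)$. Then there exists a unique $w \in W_{m+n}$ with $w|_{[0,m]} = u$ and $w|_{[m,m+n]} = \tau_m v$. -/
import Mathlib


/-- A two-dimensional word of shape `m` over the alphabet `A`: the values on the
box `[0, m₁] × [0, m₂]` have horizontal transitions allowed by `M1` and vertical
transitions allowed by `M2`. -/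
def IsWord {A : Type*} (M1 M2 : A → A → ℤ) (m : ℕ × ℕ) (w : ℕ × ℕ → A) : Prop :=
  (∀ i j, i < m.1 → j ≤ m.2 → M1 (w (i + 1, j)) (w (i, j)) = 1) ∧
  (∀ i j, i ≤ m.1 → j < m.2 → M2 (w (i, j + 1)) (w (i, j)) = 1)

section Aux

variable {A : Type*} [Fintype A] [DecidableEq A]

private lemma sum_one_unique (f : A → ℤ) (hf : ∀ a, f a = 0 ∨ f a = 1)
    (h : ∑ a, f a = 1) : ∃! a, f a = 1 := by
  have hnn : ∀ a, (0:ℤ) ≤ f a := fun a => by rcases hf a with h' | h' <;> omega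
  have hne : ∃ a, f a = 1 := by
    by_contra hc
    push_neg at hc
    have hz : ∀ a, f a = 0 := fun a => (hf a).resolve_right (hc a)
    rw [Finset.sum_congr rfl fun a _ => hz a] at h
    simp at h
  obtain ⟨a, ha⟩ := hne
  refine ⟨a, ha, fun b hb => ?_⟩
  by_contra hba
  have h2 : ∑ x ∈ ({b, a} : Finset A), f x ≤ ∑ x, f x :=
    Finset.sum_le_sum_of_subset_of_nonneg (Finset.subset_univ _) fun i _ _ => hnn i
  rw [Finset.sum_pair hba, ha, hb] at h2
  omega

private lemma key_lemma (N1 N2 : A → A → ℤ)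
    (h1 : ∀ a b, N1 a b = 0 ∨ N1 a b = 1)
    (h2 : ∀ a b, N2 a b = 0 ∨ N2 a b = 1)
    (hcomm : ∀ a b, ∑ c, N1 a c * N2 c b = ∑ c, N2 a c * N1 c b)
    (hprod : ∀ a b, (∑ c, N1 a c * N2 c b) = 0 ∨ (∑ c, N1 a c * N2 c b) = 1)
    (a b x : A) (hx1 : N1 b x = 1) (hx2 : N2 x a = 1) :
    ∃! c, N2 b c = 1 ∧ N1 c a = 1 := by
  have hnn1 : ∀ c, (0:ℤ) ≤ N1 b c * N2 c a := fun c => by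
    rcases h1 b c with h | h <;> rcases h2 c a with h' | h' <;> simp [h, h']
  have hge : (1:ℤ) ≤ ∑ c, N1 b c * N2 c a := by
    have := Finset.single_le_sum (f := fun c => N1 b c * N2 c a)
      (fun i _ => hnn1 i) (Finset.mem_univ x)
    rw [hx1, hx2, one_mul] at this
    exact this
  have hsum1 : ∑ c, N1 b c * N2 c a = 1 := by rcases hprod b a with h | h <;> omega
  have hsum2 : ∑ c, N2 b c * N1 c a = 1 := by rw [← hcomm b a]; exact hsum1
  have hf : ∀ c, N2 b c * N1 c a = 0 ∨ N2 b c * N1 c a = 1 := fun c => by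
    rcases h2 b c with h | h <;> rcases h1 c a with h' | h' <;> simp [h, h']
  obtain ⟨c, hc, hun⟩ := sum_one_unique (fun c => N2 b c * N1 c a) hf hsum2
  have hiff : ∀ d, N2 b d * N1 d a = 1 ↔ (N2 b d = 1 ∧ N1 d a = 1) := fun d => by
    rcases h2 b d with h | h <;> rcases h1 d a with h' | h' <;> simp [h, h']
  exact ⟨c, (hiff c).mp hc, fun d hd => hun d ((hiff d).mpr hd)⟩

end Aux

noncomputable def stepF {A : Type*} [Nonempty A] (N1 N2 : A → A → ℤ) (b a : A) : A :=
  Classical.epsilon fun c => N2 b c = 1 ∧ N1 c a = 1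

def fillCol {A : Type*} (step : A → A → A) (t : A) (old : ℕ → A) : ℕ → A
  | 0 => t
  | q + 1 => step (fillCol step t old q) (old (q + 1))

def fill {A : Type*} (step : A → A → A) (top init : ℕ → A) : ℕ → ℕ → A
  | 0 => init
  | p + 1 => fillCol step (top (p + 1)) (fill step top init p)

section Fill

variable {A : Type*} [Nonempty A] (N1 N2 : A → A → ℤ)
  (hkey : ∀ a b x, N1 b x = 1 → N2 x a = 1 → ∃! c, N2 b c = 1 ∧ N1 c a = 1)

include hkey

private lemma fillCol_spec (Q : ℕ) (old : ℕ → A) (t : A)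
    (hold : ∀ q, q < Q → N2 (old q) (old (q + 1)) = 1)
    (ht : N1 t (old 0) = 1) :
    ∀ q, q ≤ Q → (N1 (fillCol (stepF N1 N2) t old q) (old q) = 1 ∧
      ∀ q', q' < q → N2 (fillCol (stepF N1 N2) t old q')
        (fillCol (stepF N1 N2) t old (q' + 1)) = 1) := by
  intro q
  induction q with
  | zero => exact fun _ => ⟨ht, fun q' hq' => absurd hq' (Nat.not_lt_zero q')⟩
  | succ q ih =>
    intro hq
    obtain ⟨ih1, ih2⟩ := ih (by omega)
    have hex := hkey (old (q + 1)) (fillCol (stepF N1 N2) t old q) (old q) ih1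
      (hold q (by omega))
    have hc := Classical.epsilon_spec hex.exists
    refine ⟨hc.2, fun q' hq' => ?_⟩
    rcases Nat.lt_succ_iff_lt_or_eq.mp hq' with h | h
    · exact ih2 q' h
    · subst h; exact hc.1

private lemma fillCol_unique (Q : ℕ) (old : ℕ → A) (t : A)
    (hold : ∀ q, q < Q → N2 (old q) (old (q + 1)) = 1)
    (ht : N1 t (old 0) = 1)
    (col : ℕ → A) (h0 : col 0 = t)
    (hh : ∀ q, q ≤ Q → N1 (col q) (old q) = 1)
    (hv : ∀ q, q < Q → N2 (col q) (col (q + 1)) = 1) :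
    ∀ q, q ≤ Q → col q = fillCol (stepF N1 N2) t old q := by
  intro q
  induction q with
  | zero => exact fun _ => h0
  | succ q ih =>
    intro hq
    have ihq := ih (by omega)
    have hex := hkey (old (q + 1)) (fillCol (stepF N1 N2) t old q) (old q)
      ((fillCol_spec N1 N2 hkey Q old t hold ht q (by omega)).1) (hold q (by omega))
    have hc1 : N2 (fillCol (stepF N1 N2) t old q) (col (q + 1)) = 1 ∧
        N1 (col (q + 1)) (old (q + 1)) = 1 := by
      constructor
      · rw [← ihq]; exact hv q (by omega)
      · exact hh (q + 1) hq
    have hc2 := Classical.epsilon_spec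
      (p := fun c => N2 (fillCol (stepF N1 N2) t old q) c = 1 ∧ N1 c (old (q + 1)) = 1)
      hex.exists
    exact hex.unique hc1 hc2

variable (P Q : ℕ) (top init : ℕ → A)
  (hinit : ∀ q, q < Q → N2 (init q) (init (q + 1)) = 1)
  (htop : ∀ p, p < P → N1 (top (p + 1)) (top p) = 1)
  (hcorner : init 0 = top 0)

include hinit htop hcorner

omit hkey hinit htop in
private lemma fill_zero : ∀ p, fill (stepF N1 N2) top init p 0 = top p
  | 0 => hcorner
  | _ + 1 => rfl

private lemma fill_vert : ∀ p, p ≤ P → ∀ q, q < Q →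
    N2 (fill (stepF N1 N2) top init p q) (fill (stepF N1 N2) top init p (q + 1)) = 1 := by
  intro p
  induction p with
  | zero => exact fun _ => hinit
  | succ p ih =>
    intro hp
    have ht : N1 (top (p + 1)) (fill (stepF N1 N2) top init p 0) = 1 := by
      rw [fill_zero N1 N2 top init hcorner]
      exact htop p (by omega)
    exact fun q hq =>
      ((fillCol_spec N1 N2 hkey Q (fill (stepF N1 N2) top init p) (top (p + 1))
        (ih (by omega)) ht) Q le_rfl).2 q hq

private lemma fill_horiz : ∀ p, p < P → ∀ q, q ≤ Q →
    N1 (fill (stepF N1 N2) top init (p + 1) q) (fill (stepF N1 N2) top init p q) = 1 := by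
  intro p hp q hq
  have ht : N1 (top (p + 1)) (fill (stepF N1 N2) top init p 0) = 1 := by
    rw [fill_zero N1 N2 top init hcorner]
    exact htop p hp
  exact ((fillCol_spec N1 N2 hkey Q (fill (stepF N1 N2) top init p) (top (p + 1))
    (fill_vert N1 N2 hkey P Q top init hinit htop hcorner p (by omega)) ht) q hq).1

private lemma fill_unique (G : ℕ → ℕ → A)
    (hG0 : ∀ q, q ≤ Q → G 0 q = init q)
    (hGtop : ∀ p, p ≤ P → G p 0 = top p)
    (hGh : ∀ p, p < P → ∀ q, q ≤ Q → N1 (G (p + 1) q) (G p q) = 1)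
    (hGv : ∀ p, p ≤ P → ∀ q, q < Q → N2 (G p q) (G p (q + 1)) = 1) :
    ∀ p, p ≤ P → ∀ q, q ≤ Q → G p q = fill (stepF N1 N2) top init p q := by
  intro p
  induction p with
  | zero => exact fun _ => hG0
  | succ p ih =>
    intro hp q hq
    have ht : N1 (top (p + 1)) (fill (stepF N1 N2) top init p 0) = 1 := by
      rw [fill_zero N1 N2 top init hcorner]
      exact htop p (by omega)
    refine fillCol_unique N1 N2 hkey Q (fill (stepF N1 N2) top init p) (top (p + 1))
      (fill_vert N1 N2 hkey P Q top init hinit htop hcorner p (by omega)) ht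
      (G (p + 1)) (hGtop (p + 1) hp) ?_ (hGv (p + 1) hp) q hq
    intro q' hq'
    rw [← ih (by omega) q' hq']
    exact hGh p (by omega) q' hq'

end Fill

/-- Condition (H1), existence and uniqueness: given words `u` of shape `m` and `v` of
shape `n` with `t(u) = o(v)`, there is a unique word `w` of shape `m + n` with
`w|₍₀,m₎ = u` and `w|₍m,m+n₎ = τₘ v`. -/
theorem stmt4 {A : Type*} [Fintype A] [DecidableEq A]
    (M1 M2 : Matrix A A ℤ)
    (h1 : ∀ a b, M1 a b = 0 ∨ M1 a b = 1)
    (h2 : ∀ a b, M2 a b = 0 ∨ M2 a b = 1)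
    (hcomm : M1 * M2 = M2 * M1)
    (hprod : ∀ a b, (M1 * M2) a b = 0 ∨ (M1 * M2) a b = 1)
    (m n : ℕ × ℕ) (u v : ℕ × ℕ → A)
    (hu : IsWord (fun x y => M1 x y) (fun x y => M2 x y) m u)
    (hv : IsWord (fun x y => M1 x y) (fun x y => M2 x y) n v)
    (hmatch : u (m.1, m.2) = v (0, 0)) :
    ∃ w : ℕ × ℕ → A,
      (IsWord (fun x y => M1 x y) (fun x y => M2 x y) (m.1 + n.1, m.2 + n.2) w ∧
        (∀ i j, i ≤ m.1 → j ≤ m.2 → w (i, j) = u (i, j)) ∧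
        (∀ i j, i ≤ n.1 → j ≤ n.2 → w (m.1 + i, m.2 + j) = v (i, j))) ∧
      ∀ w' : ℕ × ℕ → A,
        (IsWord (fun x y => M1 x y) (fun x y => M2 x y) (m.1 + n.1, m.2 + n.2) w' ∧
          (∀ i j, i ≤ m.1 → j ≤ m.2 → w' (i, j) = u (i, j)) ∧
          (∀ i j, i ≤ n.1 → j ≤ n.2 → w' (m.1 + i, m.2 + j) = v (i, j))) →
        ∀ i j, i ≤ m.1 + n.1 → j ≤ m.2 + n.2 → w' (i, j) = w (i, j) := by
  haveI : Nonempty A := ⟨u (0, 0)⟩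
  obtain ⟨hu1, hu2⟩ := hu
  obtain ⟨hv1, hv2⟩ := hv
  -- the two key existence-and-uniqueness lemmas
  have hkey1 : ∀ a b x : A, M1 b x = 1 → M2 x a = 1 →
      ∃! c, M2 b c = 1 ∧ M1 c a = 1 := by
    refine key_lemma (fun a b => M1 a b) (fun a b => M2 a b) h1 h2 ?_ ?_
    · intro a b
      have := congrFun (congrFun hcomm a) b
      simpa [Matrix.mul_apply] using this
    · intro a b
      have := hprod a b
      simpa [Matrix.mul_apply] using this
  have hkey2 : ∀ a b x : A, M1 x b = 1 → M2 a x = 1 →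
      ∃! c, M2 c b = 1 ∧ M1 a c = 1 := by
    refine key_lemma (fun a b => M1 b a) (fun a b => M2 b a) (fun a b => h1 b a)
      (fun a b => h2 b a) ?_ ?_ 
    · intro a b
      have hthis := congrFun (congrFun hcomm b) a
      simp only [Matrix.mul_apply] at hthis
      calc ∑ c, M1 c a * M2 b c = ∑ c, M2 b c * M1 c a :=
            Finset.sum_congr rfl fun c _ => mul_comm _ _
        _ = ∑ c, M1 b c * M2 c a := hthis.symm
        _ = ∑ c, M2 c a * M1 b c := Finset.sum_congr rfl fun c _ => mul_comm _ _
    · intro a b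
      have h := hprod b a
      have e : ∑ c, M1 c a * M2 b c = (M1 * M2) b a := by
        calc ∑ c, M1 c a * M2 b c = ∑ c, M2 b c * M1 c a :=
              Finset.sum_congr rfl fun c _ => mul_comm _ _
          _ = (M2 * M1) b a := (Matrix.mul_apply).symm
          _ = (M1 * M2) b a := by rw [hcomm]
      rw [e]; exact h
  -- boundary data for the bottom-right rectangle
  have hinitB : ∀ q, q < m.2 →
      M2 (u (m.1, m.2 - q)) (u (m.1, m.2 - (q + 1))) = 1 := by
    intro q hq
    have := hu2 m.1 (m.2 - q - 1) le_rfl (by omega)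
    rw [show m.2 - q - 1 + 1 = m.2 - q by omega] at this
    rw [show m.2 - (q + 1) = m.2 - q - 1 by omega]
    exact this
  have htopB : ∀ p, p < n.1 → M1 (v (p + 1, 0)) (v (p, 0)) = 1 :=
    fun p hp => hv1 p 0 hp (Nat.zero_le _)
  have hcornerB : u (m.1, m.2 - 0) = v (0, 0) := hmatch
  -- boundary data for the top-left rectangle
  have hinitT : ∀ q, q < n.2 → M2 (v (0, q + 1)) (v (0, q)) = 1 :=
    fun q hq => hv2 0 q (Nat.zero_le _) hq
  have htopT : ∀ p, p < m.1 →
      M1 (u (m.1 - p, m.2)) (u (m.1 - (p + 1), m.2)) = 1 := by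
    intro p hp
    have := hu1 (m.1 - p - 1) m.2 (by omega) le_rfl
    rw [show m.1 - p - 1 + 1 = m.1 - p by omega] at this
    rw [show m.1 - (p + 1) = m.1 - p - 1 by omega]
    exact this
  have hcornerT : v (0, 0) = u (m.1 - 0, m.2) := hmatch.symm
  -- the two filled rectangles
  set F : ℕ → ℕ → A := fill (stepF (fun a b => M1 a b) (fun a b => M2 a b))
    (fun p => v (p, 0)) (fun q => u (m.1, m.2 - q)) with hF
  set G : ℕ → ℕ → A := fill (stepF (fun a b => M1 b a) (fun a b => M2 b a))
    (fun p => u (m.1 - p, m.2)) (fun q => v (0, q)) with hG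
  have hFv : ∀ p, p ≤ n.1 → ∀ q, q < m.2 → M2 (F p q) (F p (q + 1)) = 1 :=
    fill_vert _ _ hkey1 n.1 m.2 _ _ hinitB htopB hcornerB
  have hFh : ∀ p, p < n.1 → ∀ q, q ≤ m.2 → M1 (F (p + 1) q) (F p q) = 1 :=
    fill_horiz _ _ hkey1 n.1 m.2 _ _ hinitB htopB hcornerB
  have hF0 : ∀ p, F p 0 = v (p, 0) := fill_zero _ _ _ _ hcornerB
  have hF00 : ∀ q, F 0 q = u (m.1, m.2 - q) := fun q => rfl
  have hGv : ∀ p, p ≤ m.1 → ∀ q, q < n.2 → M2 (G p (q + 1)) (G p q) = 1 :=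
    fill_vert _ _ hkey2 m.1 n.2 _ _ hinitT htopT hcornerT
  have hGh : ∀ p, p < m.1 → ∀ q, q ≤ n.2 → M1 (G p q) (G (p + 1) q) = 1 :=
    fill_horiz _ _ hkey2 m.1 n.2 _ _ hinitT htopT hcornerT
  have hG0 : ∀ p, G p 0 = u (m.1 - p, m.2) := fill_zero _ _ _ _ hcornerT
  have hG00 : ∀ q, G 0 q = v (0, q) := fun q => rfl
  -- the combined word
  set W : ℕ × ℕ → A := fun ij =>
    if ij.2 ≤ m.2 then
      if ij.1 ≤ m.1 then u ij else F (ij.1 - m.1) (m.2 - ij.2)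
    else
      if m.1 ≤ ij.1 then v (ij.1 - m.1, ij.2 - m.2) else G (m.1 - ij.1) (ij.2 - m.2)
    with hWdef
  have hw_u : ∀ i j, i ≤ m.1 → j ≤ m.2 → W (i, j) = u (i, j) := by
    intro i j hi hj
    simp [hWdef, hi, hj]
  have hw_f : ∀ i j, m.1 ≤ i → j ≤ m.2 → W (i, j) = F (i - m.1) (m.2 - j) := by
    intro i j hi hj
    by_cases hi' : i ≤ m.1
    · rw [hw_u i j hi' hj, show i - m.1 = 0 by omega, hF00 (m.2 - j),
        show m.2 - (m.2 - j) = j by omega, show i = m.1 by omega]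
    · simp [hWdef, hj, hi']
  have hw_v : ∀ i j, m.1 ≤ i → m.2 ≤ j → W (i, j) = v (i - m.1, j - m.2) := by
    intro i j hi hj
    by_cases hj' : j ≤ m.2
    · rw [hw_f i j hi hj', show m.2 - j = 0 by omega, hF0 (i - m.1),
        show j - m.2 = 0 by omega]
    · simp [hWdef, hj', hi]
  have hw_g : ∀ i j, i ≤ m.1 → m.2 ≤ j → W (i, j) = G (m.1 - i) (j - m.2) := by
    intro i j hi hj
    by_cases hj' : j ≤ m.2
    · rw [hw_u i j hi hj', show j - m.2 = 0 by omega, hG0 (m.1 - i),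
        show m.1 - (m.1 - i) = i by omega, show j = m.2 by omega]
    · by_cases hi' : m.1 ≤ i
      · rw [hw_v i j hi' hj, show m.1 - i = 0 by omega, hG00 (j - m.2),
        show i - m.1 = 0 by omega]
      · simp [hWdef, hj', hi']
  refine ⟨W, ⟨⟨?_, ?_⟩, fun i j hi hj => hw_u i j hi hj, ?_⟩, ?_⟩
  · -- horizontal transitions
    intro i j hi hj
    simp only at hi hj ⊢
    by_cases hj2 : j ≤ m.2
    · by_cases hi2 : i + 1 ≤ m.1
      · rw [hw_u (i + 1) j hi2 hj2, hw_u i j (by omega) hj2]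
        exact hu1 i j (by omega) hj2
      · rw [hw_f (i + 1) j (by omega) hj2, hw_f i j (by omega) hj2,
          show i + 1 - m.1 = (i - m.1) + 1 by omega]
        exact hFh (i - m.1) (by omega) (m.2 - j) (by omega)
    · by_cases hi2 : m.1 ≤ i
      · rw [hw_v (i + 1) j (by omega) (by omega), hw_v i j hi2 (by omega),
          show i + 1 - m.1 = (i - m.1) + 1 by omega]
        exact hv1 (i - m.1) (j - m.2) (by omega) (by omega)
      · rw [hw_g (i + 1) j (by omega) (by omega), hw_g i j (by omega) (by omega),
          show m.1 - (i + 1) = m.1 - i - 1 by omega,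
          show m.1 - i = (m.1 - i - 1) + 1 by omega]
        exact hGh (m.1 - i - 1) (by omega) (j - m.2) (by omega)
  · -- vertical transitions
    intro i j hi hj
    simp only at hi hj ⊢
    by_cases hj2 : j + 1 ≤ m.2
    · by_cases hi2 : i ≤ m.1
      · rw [hw_u i (j + 1) hi2 hj2, hw_u i j hi2 (by omega)]
        exact hu2 i j hi2 (by omega)
      · rw [hw_f i (j + 1) (by omega) hj2, hw_f i j (by omega) (by omega),
          show m.2 - (j + 1) = m.2 - j - 1 by omega,
          show m.2 - j = (m.2 - j - 1) + 1 by omega]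
        exact hFv (i - m.1) (by omega) (m.2 - j - 1) (by omega)
    · by_cases hi2 : m.1 ≤ i
      · rw [hw_v i (j + 1) hi2 (by omega), hw_v i j hi2 (by omega),
          show j + 1 - m.2 = (j - m.2) + 1 by omega]
        exact hv2 (i - m.1) (j - m.2) (by omega) (by omega)
      · rw [hw_g i (j + 1) (by omega) (by omega), hw_g i j (by omega) (by omega),
          show j + 1 - m.2 = (j - m.2) + 1 by omega]
        exact hGv (m.1 - i) (by omega) (j - m.2) (by omega)
  · -- restriction to the translated second word
    intro i j hi hj
    rw [hw_v (m.1 + i) (m.2 + j) (by omega) (by omega),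
      show m.1 + i - m.1 = i by omega, show m.2 + j - m.2 = j by omega]
  · -- uniqueness
    rintro w' ⟨⟨hw'1, hw'2⟩, hw'u, hw'v⟩ i j hi hj
    simp only at hw'1 hw'2
    have hBu : ∀ p, p ≤ n.1 → ∀ q, q ≤ m.2 → w' (m.1 + p, m.2 - q) = F p q := by
      refine fill_unique _ _ hkey1 n.1 m.2 _ _ hinitB htopB hcornerB
        (fun p q => w' (m.1 + p, m.2 - q)) ?_ ?_ ?_ ?_
      · intro q hq
        exact hw'u m.1 (m.2 - q) le_rfl (by omega)
      · intro p hp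
        exact hw'v p 0 hp (Nat.zero_le _)
      · intro p hp q hq
        exact hw'1 (m.1 + p) (m.2 - q) (by omega) (by omega)
      · intro p hp q hq
        show M2 (w' (m.1 + p, m.2 - q)) (w' (m.1 + p, m.2 - (q + 1))) = 1
        have := hw'2 (m.1 + p) (m.2 - q - 1) (by omega) (by omega)
        rw [show m.2 - q - 1 + 1 = m.2 - q by omega] at this
        rw [show m.2 - (q + 1) = m.2 - q - 1 by omega]
        exact this
    have hTu : ∀ p, p ≤ m.1 → ∀ q, q ≤ n.2 → w' (m.1 - p, m.2 + q) = G p q := by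
      refine fill_unique _ _ hkey2 m.1 n.2 _ _ hinitT htopT hcornerT
        (fun p q => w' (m.1 - p, m.2 + q)) ?_ ?_ ?_ ?_
      · intro q hq
        exact hw'v 0 q (Nat.zero_le _) hq
      · intro p hp
        exact hw'u (m.1 - p) m.2 (by omega) le_rfl
      · intro p hp q hq
        show M1 (w' (m.1 - p, m.2 + q)) (w' (m.1 - (p + 1), m.2 + q)) = 1
        have := hw'1 (m.1 - p - 1) (m.2 + q) (by omega) (by omega)
        rw [show m.1 - p - 1 + 1 = m.1 - p by omega] at this
        rw [show m.1 - (p + 1) = m.1 - p - 1 by omega]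
        exact this
      · intro p hp q hq
        exact hw'2 (m.1 - p) (m.2 + q) (by omega) (by omega)
    by_cases hj2 : j ≤ m.2
    · by_cases hi2 : i ≤ m.1
      · rw [hw_u i j hi2 hj2]; exact hw'u i j hi2 hj2
      · rw [hw_f i j (by omega) hj2]
        have := hBu (i - m.1) (by omega) (m.2 - j) (by omega)
        rw [show m.1 + (i - m.1) = i by omega, show m.2 - (m.2 - j) = j by omega] at this
        exact this
    · by_cases hi2 : m.1 ≤ i
      · rw [hw_v i j hi2 (by omega)]
        have := hw'v (i - m.1) (j - m.2) (by omega) (by omega)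
        rw [show m.1 + (i - m.1) = i by omega, show m.2 + (j - m.2) = j by omega] at this
        exact this
      · rw [hw_g i j (by omega) (by omega)]
        have := hTu (m.1 - i) (by omega) (j - m.2) (by omega)
        rw [show m.1 - (m.1 - i) = i by omega, show m.2 + (j - m.2) = j by omega] at this
        exact this
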